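/- Let {X_t}_{t≥0} be a time-homogeneous Markov chain with values in a measurable state space (𝒳, ℬ_𝒳), started at X_0, and let ‖·‖ : 𝒳 → [0,∞) be a measurable nonnegative test function. For R > 0 set A_R = {x ∈ 𝒳 : ‖x‖ ≤ R}, and for x ∈ 𝒳 let τ_x(A_R) = min{t ≥ 1 : X_t ∈ A_R given X_0 = x}. Let 0 < γ < R. Assume (i) τ_x(A_R) < ∞ a.s. for every x ∈ 𝒳 and there is c₀ > 0 with sup_{x ∈ A_R} 𝔼 e^{c₀ τ_x(A_R)} < ∞, and (ii) there exists L ≥ 1 with δ := inf_{x ∈ A_R} ℙ(τ_x(A_γ) ≤ L) > 0, where A_γ = {x ∈ 𝒳 : ‖x‖ ≤ γ}. Then A_γ is also geometrically positive recurrent: τ_x(A_γ) < ∞ a.s. for every x ∈ 𝒳 and there exists c > 0 with sup_{x ∈ A_γ} 𝔼 e^{c τ_x(A_γ)} < ∞. -/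

import Mathlib

open MeasureTheory Filter Set
open scoped ENNReal NNReal Topology Classical

noncomputable section

/-- First hitting time `min {t ≥ 1 : ‖ω t‖ ≤ r}` of the "ball" `{x : ‖x‖ ≤ r}` by a
trajectory `ω : ℕ → 𝒳`, where `‖·‖` is a nonnegative test function; valued in `ℕ∞`. -/
def pathHitTime {X : Type*} (nrm : X → ℝ) (r : ℝ) (ω : ℕ → X) : ℕ∞ :=
  sInf {n : ℕ∞ | ∃ t : ℕ, n = t ∧ 1 ≤ t ∧ nrm (ω t) ≤ r}

/-- `exp (c n)`, interpreted as `∞` when `n = ∞`, as an `ℝ≥0∞`-valued payoff. -/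
def expENat (c : ℝ) (n : ℕ∞) : ℝ≥0∞ :=
  if n = ⊤ then ⊤ else ENNReal.ofReal (Real.exp (c * (n.toNat : ℝ)))

namespace S15

variable {X : Type*}

/-- hitting time of the `r`-ball at a time `≥ L`. -/
def hitGE (nrm : X → ℝ) (r : ℝ) (L : ℕ) (ω : ℕ → X) : ℕ∞ :=
  sInf {n : ℕ∞ | ∃ t : ℕ, n = t ∧ L ≤ t ∧ nrm (ω t) ≤ r}

theorem pathHitTime_eq (nrm : X → ℝ) (r : ℝ) : pathHitTime nrm r = hitGE nrm r 1 := rfl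

theorem hitGE_eq_dif (nrm : X → ℝ) (r : ℝ) (L : ℕ) (ω : ℕ → X) :
    hitGE nrm r L ω =
      if h : ∃ t : ℕ, L ≤ t ∧ nrm (ω t) ≤ r then ((Nat.find h : ℕ) : ℕ∞) else ⊤ := by
  unfold hitGE
  split_ifs with h
  · refine le_antisymm (sInf_le ⟨Nat.find h, rfl, Nat.find_spec h⟩) (le_sInf ?_)
    rintro n ⟨t, rfl, ht1, ht2⟩
    exact_mod_cast Nat.find_min' h ⟨ht1, ht2⟩
  · have : {n : ℕ∞ | ∃ t : ℕ, n = t ∧ L ≤ t ∧ nrm (ω t) ≤ r} = ∅ := by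
      ext n; simp only [mem_setOf_eq, mem_empty_iff_false, iff_false]
      rintro ⟨t, rfl, ht1, ht2⟩; exact h ⟨t, ht1, ht2⟩
    rw [this, sInf_empty]

theorem hitGE_eq_top_iff (nrm : X → ℝ) (r : ℝ) (L : ℕ) (ω : ℕ → X) :
    hitGE nrm r L ω = ⊤ ↔ ∀ t : ℕ, L ≤ t → ¬ nrm (ω t) ≤ r := by
  rw [hitGE_eq_dif]
  split_ifs with h
  · constructor
    · intro hh; exact absurd hh (by simp)
    · intro hall; exact absurd (Nat.find_spec h).2 (hall _ (Nat.find_spec h).1)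
  · simp only [true_iff]
    intro t ht hle; exact h ⟨t, ht, hle⟩

theorem hitGE_le_coe_iff (nrm : X → ℝ) (r : ℝ) (L : ℕ) (ω : ℕ → X) (n : ℕ) :
    hitGE nrm r L ω ≤ (n : ℕ∞) ↔ ∃ t : ℕ, L ≤ t ∧ t ≤ n ∧ nrm (ω t) ≤ r := by
  rw [hitGE_eq_dif]
  split_ifs with h
  · rw [Nat.cast_le]
    constructor
    · intro hle; exact ⟨Nat.find h, (Nat.find_spec h).1, hle, (Nat.find_spec h).2⟩
    · rintro ⟨t, ht1, ht2, ht3⟩; exact le_trans (Nat.find_min' h ⟨ht1, ht3⟩) ht2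
  · simp only [top_le_iff]
    constructor
    · intro hh; exact absurd hh (by simp)
    · rintro ⟨t, ht1, _, ht3⟩; exact absurd ⟨t, ht1, ht3⟩ h

theorem coe_lt_hitGE_iff (nrm : X → ℝ) (r : ℝ) (L : ℕ) (ω : ℕ → X) (n : ℕ) :
    (n : ℕ∞) < hitGE nrm r L ω ↔ ∀ t : ℕ, L ≤ t → t ≤ n → ¬ nrm (ω t) ≤ r := by
  rw [lt_iff_not_ge, hitGE_le_coe_iff]
  constructor
  · intro hh t ht1 ht2 ht3; exact hh ⟨t, ht1, ht2, ht3⟩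
  · rintro hh ⟨t, ht1, ht2, ht3⟩; exact hh t ht1 ht2 ht3

theorem hitGE_eq_coe_iff (nrm : X → ℝ) (r : ℝ) (L : ℕ) (ω : ℕ → X) (n : ℕ) :
    hitGE nrm r L ω = (n : ℕ∞) ↔
      L ≤ n ∧ nrm (ω n) ≤ r ∧ ∀ t : ℕ, L ≤ t → t < n → ¬ nrm (ω t) ≤ r := by
  rw [hitGE_eq_dif]
  split_ifs with h
  · rw [Nat.cast_inj, Nat.find_eq_iff]
    constructor
    · rintro ⟨⟨h1, h2⟩, h3⟩
      exact ⟨h1, h2, fun t ht1 ht2 ht3 => h3 t ht2 ⟨ht1, ht3⟩⟩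
    · rintro ⟨h1, h2, h3⟩
      exact ⟨⟨h1, h2⟩, fun t ht2 ⟨ht1, ht3⟩ => h3 t ht1 ht2 ht3⟩
  · constructor
    · intro hh; exact absurd hh.symm (by simp)
    · rintro ⟨h1, h2, _⟩; exact absurd ⟨n, h1, h2⟩ h

theorem hitGE_le_of (nrm : X → ℝ) (r : ℝ) (L : ℕ) (ω : ℕ → X) {t : ℕ}
    (h1 : L ≤ t) (h2 : nrm (ω t) ≤ r) : hitGE nrm r L ω ≤ (t : ℕ∞) :=
  (hitGE_le_coe_iff nrm r L ω t).2 ⟨t, h1, le_rfl, h2⟩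

theorem le_hitGE (nrm : X → ℝ) (r : ℝ) (L : ℕ) (ω : ℕ → X) :
    (L : ℕ∞) ≤ hitGE nrm r L ω := by
  rw [hitGE_eq_dif]
  split_ifs with h
  · exact_mod_cast (Nat.find_spec h).1
  · exact le_top

theorem eq_coe_of_ne_top {m : ℕ∞} (h : m ≠ ⊤) : ∃ s : ℕ, m = (s : ℕ∞) := by
  induction m using ENat.recTopCoe with
  | top => exact absurd rfl h
  | coe k => exact ⟨k, rfl⟩

theorem hitGE_mono_r (nrm : X → ℝ) {r r' : ℝ} (hr : r ≤ r') (L : ℕ) (ω : ℕ → X) :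
    hitGE nrm r' L ω ≤ hitGE nrm r L ω := by
  rcases eq_or_ne (hitGE nrm r L ω) ⊤ with h | h
  · rw [h]; exact le_top
  · obtain ⟨n, hn⟩ := eq_coe_of_ne_top h
    rw [hn]
    obtain ⟨h1, h2, _⟩ := (hitGE_eq_coe_iff nrm r L ω n).1 hn
    exact hitGE_le_of nrm r' L ω h1 (h2.trans hr)

/-- shift relation: if the hit time exceeds `n`, it decomposes across the shift by `n`. -/
theorem hitGE_shift (nrm : X → ℝ) (r : ℝ) (ω : ℕ → X) {n : ℕ}
    (h : (n : ℕ∞) < hitGE nrm r 1 ω) :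
    hitGE nrm r 1 ω = (n : ℕ∞) + hitGE nrm r 1 (fun k => ω (k + n)) := by
  have hnot : ∀ t : ℕ, 1 ≤ t → t ≤ n → ¬ nrm (ω t) ≤ r :=
    (coe_lt_hitGE_iff nrm r 1 ω n).1 h
  rcases em (∃ s : ℕ, 1 ≤ s ∧ nrm (ω (s + n)) ≤ r) with hs | hs
  · obtain ⟨s₀, hs₀1, hs₀2⟩ := hs
    have ht : ∃ t : ℕ, 1 ≤ t ∧ nrm (ω t) ≤ r := ⟨s₀ + n, by omega, hs₀2⟩
    rw [hitGE_eq_dif, dif_pos ht, hitGE_eq_dif, dif_pos ⟨s₀, hs₀1, hs₀2⟩]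
    rw [← Nat.cast_add, Nat.cast_inj]
    set hs' : ∃ s : ℕ, 1 ≤ s ∧ nrm (ω (s + n)) ≤ r := ⟨s₀, hs₀1, hs₀2⟩
    apply le_antisymm
    · have hsp := Nat.find_spec hs'
      apply Nat.find_le
      refine ⟨by omega, ?_⟩
      show nrm (ω (n + Nat.find hs')) ≤ r
      rw [Nat.add_comm]
      exact hsp.2
    · have hspec := Nat.find_spec ht
      have hgt : n < Nat.find ht := by
        by_contra hle
        exact hnot _ hspec.1 (by omega) hspec.2
      have : Nat.find hs' ≤ Nat.find ht - n := by
        apply Nat.find_min' hs'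
        constructor
        · omega
        · have : Nat.find ht - n + n = Nat.find ht := by omega
          rw [this]; exact hspec.2
      omega
  · have ht : ¬ ∃ t : ℕ, 1 ≤ t ∧ nrm (ω t) ≤ r := by
      rintro ⟨t, ht1, ht2⟩
      rcases le_or_gt t n with hle | hlt
      · exact hnot t ht1 hle ht2
      · exact hs ⟨t - n, by omega, by rw [show t - n + n = t by omega]; exact ht2⟩
    rw [hitGE_eq_dif, dif_neg ht, hitGE_eq_dif, dif_neg hs, add_top]

/-- the `(m+1)`-delayed hit time is at most first return plus `m`-delayed hit of the shift. -/
theorem hitGE_succ_le (nrm : X → ℝ) (r : ℝ) (ω : ℕ → X) {n m : ℕ} (hm : 1 ≤ m)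
    (h : hitGE nrm r 1 ω = (n : ℕ∞)) :
    hitGE nrm r (m + 1) ω ≤ (n : ℕ∞) + hitGE nrm r m (fun k => ω (k + n)) := by
  rcases eq_or_ne (hitGE nrm r m (fun k => ω (k + n))) ⊤ with htop | hne
  · rw [htop, add_top]; exact le_top
  · obtain ⟨s, hs⟩ := eq_coe_of_ne_top hne
    rw [hs]
    obtain ⟨hs1, hs2, _⟩ := (hitGE_eq_coe_iff nrm r m _ s).1 hs
    obtain ⟨hn1, _, _⟩ := (hitGE_eq_coe_iff nrm r 1 ω n).1 h
    have hle : hitGE nrm r (m + 1) ω ≤ ((s + n : ℕ) : ℕ∞) :=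
      hitGE_le_of nrm r (m + 1) ω (by omega) hs2
    refine hle.trans (le_of_eq ?_)
    push_cast
    ring

/-- coordinate dependence: `hitGE = n` only depends on coordinates `≤ n`. -/
theorem hitGE_eq_coe_coord (nrm : X → ℝ) (r : ℝ) (L : ℕ) {ω ω' : ℕ → X} {n : ℕ}
    (hω : ∀ i ≤ n, ω i = ω' i) :
    hitGE nrm r L ω = (n : ℕ∞) ↔ hitGE nrm r L ω' = (n : ℕ∞) := by
  rw [hitGE_eq_coe_iff, hitGE_eq_coe_iff, hω n le_rfl]
  constructor <;> rintro ⟨h1, h2, h3⟩ <;> refine ⟨h1, h2, fun t ht1 ht2 => ?_⟩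
  · rw [← hω t (le_of_lt ht2)]; exact h3 t ht1 ht2
  · rw [hω t (le_of_lt ht2)]; exact h3 t ht1 ht2

theorem coe_lt_hitGE_coord (nrm : X → ℝ) (r : ℝ) (L : ℕ) {ω ω' : ℕ → X} {n : ℕ}
    (hω : ∀ i ≤ n, ω i = ω' i) :
    ((n : ℕ∞) < hitGE nrm r L ω) ↔ ((n : ℕ∞) < hitGE nrm r L ω') := by
  rw [coe_lt_hitGE_iff, coe_lt_hitGE_iff]
  constructor <;> intro h t ht1 ht2
  · rw [← hω t ht2]; exact h t ht1 ht2
  · rw [hω t ht2]; exact h t ht1 ht2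

/-! ### expENat lemmas -/

theorem expENat_top (c : ℝ) : expENat c ⊤ = ⊤ := rfl

theorem expENat_coe (c : ℝ) (n : ℕ) :
    expENat c (n : ℕ∞) = ENNReal.ofReal (Real.exp (c * n)) := by
  unfold expENat
  rw [if_neg (by simp)]
  simp

theorem expENat_ne_zero (c : ℝ) (n : ℕ∞) : expENat c n ≠ 0 := by
  induction n using ENat.recTopCoe with
  | top => simp [expENat_top]
  | coe k => rw [expENat_coe]; positivity

theorem expENat_mono {c : ℝ} (hc : 0 ≤ c) {m m' : ℕ∞} (h : m ≤ m') :
    expENat c m ≤ expENat c m' := by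
  induction m' using ENat.recTopCoe with
  | top => rw [expENat_top]; exact le_top
  | coe k =>
    induction m using ENat.recTopCoe with
    | top => exact absurd h (by simp)
    | coe j =>
      rw [expENat_coe, expENat_coe]
      have : (j : ℝ) ≤ (k : ℝ) := by exact_mod_cast (by exact_mod_cast h : j ≤ k)
      exact ENNReal.ofReal_le_ofReal (Real.exp_le_exp.2 (by nlinarith))

theorem expENat_mono_c {c c' : ℝ} (hc : 0 ≤ c) (hcc : c ≤ c') (m : ℕ∞) :
    expENat c m ≤ expENat c' m := by
  induction m using ENat.recTopCoe with
  | top => rw [expENat_top, expENat_top]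
  | coe k =>
    rw [expENat_coe, expENat_coe]
    have : (0:ℝ) ≤ k := Nat.cast_nonneg k
    exact ENNReal.ofReal_le_ofReal (Real.exp_le_exp.2 (by nlinarith))

theorem expENat_coe_add (c : ℝ) (n : ℕ) (m : ℕ∞) :
    expENat c ((n : ℕ∞) + m) = ENNReal.ofReal (Real.exp (c * n)) * expENat c m := by
  induction m using ENat.recTopCoe with
  | top =>
    rw [add_top, expENat_top,
      ENNReal.mul_top (ne_of_gt (ENNReal.ofReal_pos.2 (Real.exp_pos _)))]
  | coe k =>
    rw [← Nat.cast_add, expENat_coe, expENat_coe, ← ENNReal.ofReal_mul (le_of_lt (Real.exp_pos _)),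
      ← Real.exp_add]
    congr 2
    push_cast
    ring

theorem expENat_le_of_le {c : ℝ} (hc : 0 ≤ c) {m : ℕ∞} {n : ℕ} (h : m ≤ (n : ℕ∞)) :
    expENat c m ≤ ENNReal.ofReal (Real.exp (c * n)) := by
  calc expENat c m ≤ expENat c (n : ℕ∞) := expENat_mono hc h
  _ = _ := expENat_coe c n

theorem expENat_decay {c c₀ : ℝ} (hc : 0 ≤ c) (hcc : c ≤ c₀) {N : ℕ} {m : ℕ∞}
    (h : (N : ℕ∞) ≤ m) :
    expENat c m ≤ ENNReal.ofReal (Real.exp ((c - c₀) * N)) * expENat c₀ m := by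
  induction m using ENat.recTopCoe with
  | top =>
    rw [expENat_top c, expENat_top c₀,
      ENNReal.mul_top (ne_of_gt (ENNReal.ofReal_pos.2 (Real.exp_pos _)))]
  | coe k =>
    have hNk : (N : ℝ) ≤ (k : ℝ) := by exact_mod_cast (by exact_mod_cast h : N ≤ k)
    rw [expENat_coe, expENat_coe, ← ENNReal.ofReal_mul (le_of_lt (Real.exp_pos _)),
      ← Real.exp_add]
    apply ENNReal.ofReal_le_ofReal
    apply Real.exp_le_exp.2
    nlinarith

theorem min_add_le {a b c : ℕ∞} : min (a + b) c ≤ a + min b c := by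
  rcases le_total b c with h | h
  · rw [min_eq_left h]; exact min_le_left _ _
  · rw [min_eq_right h]; exact le_trans (min_le_right _ _) (le_add_self)


/-! ### measurability -/

section Meas

variable [MeasurableSpace X] {nrm : X → ℝ}

theorem measurableSet_hitGE_le (hnrm : Measurable nrm) (r : ℝ) (L n : ℕ) :
    MeasurableSet {ω : ℕ → X | hitGE nrm r L ω ≤ (n : ℕ∞)} := by
  have heq : {ω : ℕ → X | hitGE nrm r L ω ≤ (n : ℕ∞)} =
      ⋃ t : ℕ, {ω : ℕ → X | L ≤ t ∧ t ≤ n ∧ nrm (ω t) ≤ r} := by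
    ext ω; simp only [mem_setOf_eq, mem_iUnion, hitGE_le_coe_iff]
  rw [heq]
  apply MeasurableSet.iUnion
  intro t
  by_cases h : L ≤ t ∧ t ≤ n
  · have heq2 : {ω : ℕ → X | L ≤ t ∧ t ≤ n ∧ nrm (ω t) ≤ r} = {ω | nrm (ω t) ≤ r} := by
      ext ω; simp [h.1, h.2]
    rw [heq2]
    exact measurableSet_le (hnrm.comp (measurable_pi_apply t)) measurable_const
  · have heq2 : {ω : ℕ → X | L ≤ t ∧ t ≤ n ∧ nrm (ω t) ≤ r} = ∅ := by
      ext ω; simp only [mem_setOf_eq, mem_empty_iff_false, iff_false]; tauto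
    rw [heq2]; exact MeasurableSet.empty

theorem measurableSet_hitGE_eq (hnrm : Measurable nrm) (r : ℝ) {L : ℕ} (hL : 1 ≤ L) (n : ℕ) :
    MeasurableSet {ω : ℕ → X | hitGE nrm r L ω = (n : ℕ∞)} := by
  rcases n with _ | k
  · have heq : {ω : ℕ → X | hitGE nrm r L ω = ((0 : ℕ) : ℕ∞)} = ∅ := by
      ext ω; simp only [mem_setOf_eq, mem_empty_iff_false, iff_false]
      intro h
      obtain ⟨h1, -, -⟩ := (hitGE_eq_coe_iff nrm r L ω 0).1 h
      omega
    rw [heq]; exact MeasurableSet.empty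
  · have heq : {ω : ℕ → X | hitGE nrm r L ω = ((k + 1 : ℕ) : ℕ∞)} =
        {ω : ℕ → X | hitGE nrm r L ω ≤ ((k + 1 : ℕ) : ℕ∞)} \
          {ω : ℕ → X | hitGE nrm r L ω ≤ ((k : ℕ) : ℕ∞)} := by
      ext ω
      simp only [mem_setOf_eq, mem_diff]
      constructor
      · intro h
        refine ⟨le_of_eq h, ?_⟩
        rw [h, Nat.cast_le]
        omega
      · rintro ⟨h1, h2⟩
        have hne : hitGE nrm r L ω ≠ ⊤ := by
          intro htop; rw [htop] at h1; exact absurd (top_le_iff.1 h1) (ENat.coe_ne_top _)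
        obtain ⟨s, hsv⟩ := eq_coe_of_ne_top hne
        rw [hsv] at h1 h2 ⊢
        rw [Nat.cast_le] at h1
        rw [Nat.cast_le] at h2
        rw [Nat.cast_inj]
        omega
    rw [heq]
    exact (measurableSet_hitGE_le hnrm r L (k + 1)).diff (measurableSet_hitGE_le hnrm r L k)

theorem measurableSet_hitGE_top (hnrm : Measurable nrm) (r : ℝ) (L : ℕ) :
    MeasurableSet {ω : ℕ → X | hitGE nrm r L ω = ⊤} := by
  have heq : {ω : ℕ → X | hitGE nrm r L ω = ⊤} =
      ⋂ n : ℕ, {ω : ℕ → X | hitGE nrm r L ω ≤ (n : ℕ∞)}ᶜ := by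
    ext ω
    simp only [mem_setOf_eq, mem_iInter, mem_compl_iff]
    constructor
    · intro h n hle
      rw [h, top_le_iff] at hle
      exact absurd hle (by simp)
    · intro h
      by_contra hne
      obtain ⟨s, hsv⟩ := eq_coe_of_ne_top hne
      exact h s (le_of_eq hsv)
  rw [heq]
  exact MeasurableSet.iInter fun n => (measurableSet_hitGE_le hnrm r L n).compl

theorem measurableSet_hitGE_fiber (hnrm : Measurable nrm) (r : ℝ) {L : ℕ} (hL : 1 ≤ L)
    (v : ℕ∞) : MeasurableSet {ω : ℕ → X | hitGE nrm r L ω = v} := by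
  induction v using ENat.recTopCoe with
  | top => exact measurableSet_hitGE_top hnrm r L
  | coe k => exact measurableSet_hitGE_eq hnrm r hL k

theorem measurable_comp_hitGE (hnrm : Measurable nrm) (r : ℝ) {L : ℕ} (hL : 1 ≤ L)
    (φ : ℕ∞ → ℝ≥0∞) : Measurable fun ω : ℕ → X => φ (hitGE nrm r L ω) := by
  intro s _
  have heq : (fun ω : ℕ → X => φ (hitGE nrm r L ω)) ⁻¹' s =
      ⋃ (v : ℕ∞) (_ : φ v ∈ s), {ω : ℕ → X | hitGE nrm r L ω = v} := by
    ext ω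
    simp only [mem_preimage, mem_iUnion, mem_setOf_eq]
    constructor
    · intro h; exact ⟨_, h, rfl⟩
    · rintro ⟨v, hv, he⟩; rw [he]; exact hv
  rw [heq]
  exact MeasurableSet.biUnion (to_countable _) fun v _ => measurableSet_hitGE_fiber hnrm r hL v

theorem measurable_shift (n : ℕ) : Measurable fun (ω : ℕ → X) (k : ℕ) => ω (k + n) :=
  measurable_pi_lambda _ fun k => measurable_pi_apply (k + n)

end Meas

/-! ### integration helpers -/

section Int

variable [MeasurableSpace X]

theorem tsum_le_lintegral (ν : Measure (ℕ → X)) (A : ℕ → Set (ℕ → X))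
    (hA : ∀ n, MeasurableSet (A n)) (C : ℕ → ℝ≥0∞) (f : (ℕ → X) → ℝ≥0∞)
    (hpt : ∀ ω, (∑' n, (A n).indicator (fun _ => C n) ω) ≤ f ω) :
    (∑' n, C n * ν (A n)) ≤ ∫⁻ ω, f ω ∂ν := by
  calc ∑' n, C n * ν (A n) = ∑' n, ∫⁻ ω, (A n).indicator (fun _ => C n) ω ∂ν :=
        tsum_congr fun n => (lintegral_indicator_const (hA n) (C n)).symm
  _ = ∫⁻ ω, ∑' n, (A n).indicator (fun _ => C n) ω ∂ν :=
        (lintegral_tsum fun n => (measurable_const.indicator (hA n)).aemeasurable).symm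
  _ ≤ _ := lintegral_mono hpt

theorem markov_bound (μ : X → Measure (ℕ → X))
    (hMarkov : ∀ (x : X) (n : ℕ) (g h : (ℕ → X) → ℝ≥0∞),
      Measurable g → Measurable h →
      (∀ ω ω' : ℕ → X, (∀ i ≤ n, ω i = ω' i) → h ω = h ω') →
      ∫⁻ ω, h ω * g (fun k => ω (k + n)) ∂(μ x) =
        ∫⁻ ω, h ω * ∫⁻ ω', g ω' ∂(μ (ω n)) ∂(μ x))
    (x : X) (n : ℕ) (A : Set (ℕ → X)) (hA : MeasurableSet A)
    (hcoord : ∀ ω ω' : ℕ → X, (∀ i ≤ n, ω i = ω' i) → (ω ∈ A ↔ ω' ∈ A))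
    (C : ℝ≥0∞) (g : (ℕ → X) → ℝ≥0∞) (hg : Measurable g) (D : ℝ≥0∞)
    (hD : ∀ ω ∈ A, ∫⁻ ω', g ω' ∂(μ (ω n)) ≤ D) :
    ∫⁻ ω, A.indicator (fun _ => C) ω * g (fun k => ω (k + n)) ∂(μ x) ≤ C * D * μ x A := by
  have hcoord' : ∀ ω ω' : ℕ → X, (∀ i ≤ n, ω i = ω' i) →
      A.indicator (fun _ => C) ω = A.indicator (fun _ => C) ω' := by
    intro ω ω' hagree
    by_cases hω : ω ∈ A
    · rw [indicator_of_mem hω, indicator_of_mem ((hcoord ω ω' hagree).1 hω)]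
    · rw [indicator_of_notMem hω,
        indicator_of_notMem (fun hmem => hω ((hcoord ω ω' hagree).2 hmem))]
  have key := hMarkov x n g (A.indicator fun _ => C) hg
    (measurable_const.indicator hA) hcoord'
  rw [key]
  calc ∫⁻ ω, A.indicator (fun _ => C) ω * ∫⁻ ω', g ω' ∂(μ (ω n)) ∂(μ x)
      ≤ ∫⁻ ω, A.indicator (fun _ => C * D) ω ∂(μ x) := by
        apply lintegral_mono
        intro ω
        dsimp only
        by_cases hω : ω ∈ A
        · rw [indicator_of_mem hω, indicator_of_mem hω]
          exact mul_le_mul_right (hD ω hω) C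
        · rw [indicator_of_notMem hω, indicator_of_notMem hω, zero_mul]
  _ = C * D * μ x A := lintegral_indicator_const hA _

end Int

/-! ### iterated moment bound -/

section Main

variable [MeasurableSpace X] {nrm : X → ℝ}

theorem moment_hitGE (μ : X → Measure (ℕ → X))
    (hMarkov : ∀ (x : X) (n : ℕ) (g h : (ℕ → X) → ℝ≥0∞),
      Measurable g → Measurable h →
      (∀ ω ω' : ℕ → X, (∀ i ≤ n, ω i = ω' i) → h ω = h ω') →
      ∫⁻ ω, h ω * g (fun k => ω (k + n)) ∂(μ x) =
        ∫⁻ ω, h ω * ∫⁻ ω', g ω' ∂(μ (ω n)) ∂(μ x))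
    (hnrm : Measurable nrm) (R : ℝ) {c₀ : ℝ} (hc₀ : 0 < c₀) (M1 : ℝ≥0∞)
    (hfin : ∀ x, μ x {ω | hitGE nrm R 1 ω = ⊤} = 0)
    (hbase : ∀ x, nrm x ≤ R → ∫⁻ ω, expENat c₀ (hitGE nrm R 1 ω) ∂(μ x) ≤ M1) :
    ∀ m, 1 ≤ m → ∀ x, nrm x ≤ R →
      ∫⁻ ω, expENat c₀ (hitGE nrm R m ω) ∂(μ x) ≤ M1 ^ m := by
  intro m
  induction m with
  | zero => omega
  | succ k ih =>
    intro _ x hx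
    rcases Nat.eq_zero_or_pos k with hk0 | hk
    · subst hk0
      simpa using hbase x hx
    -- notation
    set FA : ℕ → Set (ℕ → X) := fun n => {ω' | hitGE nrm R 1 ω' = (n : ℕ∞)} with hFA
    set FT : Set (ℕ → X) := {ω' | hitGE nrm R 1 ω' = ⊤} with hFT
    set Cn : ℕ → ℝ≥0∞ := fun n => ENNReal.ofReal (Real.exp (c₀ * n)) with hCn
    have hFAm : ∀ n, MeasurableSet (FA n) := fun n => measurableSet_hitGE_eq hnrm R le_rfl n
    have hg : Measurable fun ω : ℕ → X => expENat c₀ (hitGE nrm R k ω) :=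
      measurable_comp_hitGE hnrm R hk (expENat c₀)
    have htermmeas : ∀ n : ℕ, Measurable fun ω : ℕ → X =>
        (FA n).indicator (fun _ => Cn n) ω * expENat c₀ (hitGE nrm R k (fun j => ω (j + n))) :=
      fun n => (measurable_const.indicator (hFAm n)).mul (hg.comp (measurable_shift n))
    have hpt : ∀ ω : ℕ → X, expENat c₀ (hitGE nrm R (k + 1) ω) ≤
        (∑' n : ℕ, (FA n).indicator (fun _ => Cn n) ω *
          expENat c₀ (hitGE nrm R k (fun j => ω (j + n)))) +
        FT.indicator (fun _ => (⊤ : ℝ≥0∞)) ω := by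
      intro ω
      rcases eq_or_ne (hitGE nrm R 1 ω) ⊤ with htop | hne
      · rw [indicator_of_mem (by exact htop), add_top]
        exact le_top
      · obtain ⟨n, hn⟩ := eq_coe_of_ne_top hne
        rw [indicator_of_notMem (by simp only [hFT, mem_setOf_eq]; rw [hn]; simp), add_zero]
        refine le_trans ?_ (ENNReal.le_tsum n)
        rw [indicator_of_mem (by exact hn)]
        calc expENat c₀ (hitGE nrm R (k + 1) ω)
            ≤ expENat c₀ ((n : ℕ∞) + hitGE nrm R k (fun j => ω (j + n))) :=
              expENat_mono hc₀.le (hitGE_succ_le nrm R ω hk hn)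
        _ = _ := expENat_coe_add c₀ n _
    calc ∫⁻ ω, expENat c₀ (hitGE nrm R (k + 1) ω) ∂(μ x)
        ≤ ∫⁻ ω, ((∑' n : ℕ, (FA n).indicator (fun _ => Cn n) ω *
            expENat c₀ (hitGE nrm R k (fun j => ω (j + n)))) +
            FT.indicator (fun _ => (⊤ : ℝ≥0∞)) ω) ∂(μ x) := lintegral_mono hpt
      _ = (∫⁻ ω, ∑' n : ℕ, (FA n).indicator (fun _ => Cn n) ω *
            expENat c₀ (hitGE nrm R k (fun j => ω (j + n))) ∂(μ x)) +
          ∫⁻ ω, FT.indicator (fun _ => (⊤ : ℝ≥0∞)) ω ∂(μ x) :=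
          lintegral_add_left (Measurable.ennreal_tsum htermmeas) _
      _ = (∑' n : ℕ, ∫⁻ ω, (FA n).indicator (fun _ => Cn n) ω *
            expENat c₀ (hitGE nrm R k (fun j => ω (j + n))) ∂(μ x)) + ⊤ * μ x FT := by
          rw [lintegral_tsum fun n => (htermmeas n).aemeasurable,
            lintegral_indicator_const (measurableSet_hitGE_top hnrm R 1)]
      _ = (∑' n : ℕ, ∫⁻ ω, (FA n).indicator (fun _ => Cn n) ω *
            expENat c₀ (hitGE nrm R k (fun j => ω (j + n))) ∂(μ x)) := by
          rw [hfin x, mul_zero, add_zero]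
      _ ≤ ∑' n : ℕ, Cn n * M1 ^ k * μ x (FA n) := by
          apply ENNReal.tsum_le_tsum
          intro n
          refine markov_bound μ hMarkov x n (FA n) (hFAm n) ?_ (Cn n) _ hg (M1 ^ k) ?_
          · intro ω ω' hagree
            exact hitGE_eq_coe_coord nrm R 1 hagree
          · intro ω hω
            have hval : nrm (ω n) ≤ R :=
              ((hitGE_eq_coe_iff nrm R 1 ω n).1 hω).2.1
            exact ih hk (ω n) hval
      _ = M1 ^ k * ∑' n : ℕ, Cn n * μ x (FA n) := by
          rw [← ENNReal.tsum_mul_left]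
          exact tsum_congr fun n => by ring
      _ ≤ M1 ^ k * M1 := by
          apply mul_le_mul_right
          refine le_trans (tsum_le_lintegral (μ x) FA hFAm Cn _ ?_) (hbase x hx)
          intro ω
          rcases eq_or_ne (hitGE nrm R 1 ω) ⊤ with htop | hne
          · have hz : ∀ n : ℕ, (FA n).indicator (fun _ => Cn n) ω = 0 := by
              intro n
              apply indicator_of_notMem
              simp only [hFA, mem_setOf_eq]
              rw [htop]
              simp
            simp only [hz, tsum_zero]
            exact zero_le
          · obtain ⟨n, hn⟩ := eq_coe_of_ne_top hne
            have heval : (∑' j : ℕ, (FA j).indicator (fun _ => Cn j) ω) = Cn n := by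
              rw [tsum_eq_single n]
              · exact indicator_of_mem (by exact hn) _
              · intro j hj
                apply indicator_of_notMem
                simp only [hFA, mem_setOf_eq]
                rw [hn]
                exact fun hc => hj (by exact_mod_cast hc.symm)
            rw [heval, hn, expENat_coe]
      _ = M1 ^ (k + 1) := by rw [pow_succ]

theorem recursion_step (μ : X → Measure (ℕ → X))
    (hMarkov : ∀ (x : X) (n : ℕ) (g h : (ℕ → X) → ℝ≥0∞),
      Measurable g → Measurable h →
      (∀ ω ω' : ℕ → X, (∀ i ≤ n, ω i = ω' i) → h ω = h ω') →
      ∫⁻ ω, h ω * g (fun k => ω (k + n)) ∂(μ x) =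
        ∫⁻ ω, h ω * ∫⁻ ω', g ω' ∂(μ (ω n)) ∂(μ x))
    (hnrm : Measurable nrm) (R γ : ℝ) {L : ℕ} (hL : 1 ≤ L) {c : ℝ} (hc : 0 < c)
    (K βbar ST : ℝ≥0∞) (T : ℕ) (x : X)
    (hρK : ∫⁻ ω, expENat c (hitGE nrm R L ω) ∂(μ x) ≤ K)
    (hρtop : μ x {ω | hitGE nrm R L ω = ⊤} = 0)
    (hβ : ∫⁻ ω, expENat c (hitGE nrm R L ω) *
        ({ω' : ℕ → X | hitGE nrm γ 1 ω' ≤ (L : ℕ∞)}ᶜ).indicator (fun _ => (1 : ℝ≥0∞)) ω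
        ∂(μ x) ≤ βbar)
    (hS : ∀ y, nrm y ≤ R →
      ∫⁻ ω, expENat c (min (hitGE nrm γ 1 ω) (T : ℕ∞)) ∂(μ y) ≤ ST) :
    ∫⁻ ω, expENat c (min (hitGE nrm γ 1 ω) (T : ℕ∞)) ∂(μ x) ≤ K + βbar * ST := by
  classical
  set gT : (ℕ → X) → ℝ≥0∞ := fun ω => expENat c (min (hitGE nrm γ 1 ω) (T : ℕ∞)) with hgT
  have hgTmeas : Measurable gT :=
    measurable_comp_hitGE hnrm γ le_rfl (fun v => expENat c (min v (T : ℕ∞)))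
  set A1 : ℕ → Set (ℕ → X) := fun n =>
    {ω | hitGE nrm R L ω = (n : ℕ∞)} ∩ {ω | hitGE nrm γ 1 ω ≤ (n : ℕ∞)} with hA1
  set A2 : ℕ → Set (ℕ → X) := fun n =>
    {ω | hitGE nrm R L ω = (n : ℕ∞)} ∩ {ω | hitGE nrm γ 1 ω ≤ (n : ℕ∞)}ᶜ with hA2
  set PT : Set (ℕ → X) := {ω | hitGE nrm R L ω = ⊤} with hPT
  set Cn : ℕ → ℝ≥0∞ := fun n => ENNReal.ofReal (Real.exp (c * n)) with hCn
  have hA1m : ∀ n, MeasurableSet (A1 n) := fun n =>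
    (measurableSet_hitGE_eq hnrm R hL n).inter (measurableSet_hitGE_le hnrm γ 1 n)
  have hA2m : ∀ n, MeasurableSet (A2 n) := fun n =>
    (measurableSet_hitGE_eq hnrm R hL n).inter (measurableSet_hitGE_le hnrm γ 1 n).compl
  have ht1meas : Measurable fun ω => ∑' n : ℕ, (A1 n).indicator (fun _ => Cn n) ω :=
    Measurable.ennreal_tsum fun n => measurable_const.indicator (hA1m n)
  have ht2term : ∀ n : ℕ, Measurable fun ω : ℕ → X =>
      (A2 n).indicator (fun _ => Cn n) ω * gT (fun k => ω (k + n)) :=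
    fun n => (measurable_const.indicator (hA2m n)).mul (hgTmeas.comp (measurable_shift n))
  have ht2meas : Measurable fun ω => ∑' n : ℕ,
      (A2 n).indicator (fun _ => Cn n) ω * gT (fun k => ω (k + n)) :=
    Measurable.ennreal_tsum ht2term
  -- pointwise decomposition
  have hpt : ∀ ω : ℕ → X, gT ω ≤
      (∑' n : ℕ, (A1 n).indicator (fun _ => Cn n) ω) +
      (∑' n : ℕ, (A2 n).indicator (fun _ => Cn n) ω * gT (fun k => ω (k + n))) +
      PT.indicator (fun _ => (⊤ : ℝ≥0∞)) ω := by
    intro ω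
    rcases eq_or_ne (hitGE nrm R L ω) ⊤ with htop | hne
    · rw [indicator_of_mem (by exact htop), add_top]
      exact le_top
    · obtain ⟨n, hn⟩ := eq_coe_of_ne_top hne
      by_cases hτ : hitGE nrm γ 1 ω ≤ (n : ℕ∞)
      · have hbound : gT ω ≤ Cn n := by
          rw [hgT]
          exact expENat_le_of_le hc.le (le_trans (min_le_left _ _) hτ)
        have hmem : ω ∈ A1 n := ⟨hn, hτ⟩
        calc gT ω ≤ Cn n := hbound
        _ = (A1 n).indicator (fun _ => Cn n) ω := (indicator_of_mem hmem (fun _ => Cn n)).symm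
        _ ≤ ∑' j : ℕ, (A1 j).indicator (fun _ => Cn j) ω := ENNReal.le_tsum n
        _ ≤ _ := le_add_right (le_add_right le_rfl)
      · have hτ' : (n : ℕ∞) < hitGE nrm γ 1 ω := not_le.1 hτ
        have hshift := hitGE_shift nrm γ ω hτ'
        have hbound : gT ω ≤ Cn n * gT (fun k => ω (k + n)) := by
          rw [hgT]
          dsimp only
          rw [hshift]
          calc expENat c (min ((n : ℕ∞) + hitGE nrm γ 1 (fun k => ω (k + n))) (T : ℕ∞))
              ≤ expENat c ((n : ℕ∞) + min (hitGE nrm γ 1 (fun k => ω (k + n))) (T : ℕ∞)) :=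
                expENat_mono hc.le min_add_le
          _ = Cn n * expENat c (min (hitGE nrm γ 1 (fun k => ω (k + n))) (T : ℕ∞)) :=
                expENat_coe_add c n _
        have hmem : ω ∈ A2 n := ⟨hn, hτ⟩
        calc gT ω ≤ Cn n * gT (fun k => ω (k + n)) := hbound
        _ = (A2 n).indicator (fun _ => Cn n) ω * gT (fun k => ω (k + n)) := by
              rw [indicator_of_mem hmem]
        _ ≤ ∑' j : ℕ, (A2 j).indicator (fun _ => Cn j) ω * gT (fun k => ω (k + j)) :=
              ENNReal.le_tsum n
        _ ≤ _ := le_add_right (le_add_left le_rfl)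
  -- integrate
  calc ∫⁻ ω, gT ω ∂(μ x)
      ≤ ∫⁻ ω, ((∑' n : ℕ, (A1 n).indicator (fun _ => Cn n) ω) +
          (∑' n : ℕ, (A2 n).indicator (fun _ => Cn n) ω * gT (fun k => ω (k + n))) +
          PT.indicator (fun _ => (⊤ : ℝ≥0∞)) ω) ∂(μ x) := lintegral_mono hpt
    _ = (∫⁻ ω, (∑' n : ℕ, (A1 n).indicator (fun _ => Cn n) ω) +
          (∑' n : ℕ, (A2 n).indicator (fun _ => Cn n) ω * gT (fun k => ω (k + n))) ∂(μ x)) +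
        ∫⁻ ω, PT.indicator (fun _ => (⊤ : ℝ≥0∞)) ω ∂(μ x) :=
          lintegral_add_left (ht1meas.add ht2meas) _
    _ = (∫⁻ ω, (∑' n : ℕ, (A1 n).indicator (fun _ => Cn n) ω) ∂(μ x)) +
        (∫⁻ ω, (∑' n : ℕ, (A2 n).indicator (fun _ => Cn n) ω * gT (fun k => ω (k + n))) ∂(μ x)) +
        ∫⁻ ω, PT.indicator (fun _ => (⊤ : ℝ≥0∞)) ω ∂(μ x) := by
          rw [lintegral_add_left ht1meas]
    _ = (∫⁻ ω, (∑' n : ℕ, (A1 n).indicator (fun _ => Cn n) ω) ∂(μ x)) +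
        (∫⁻ ω, (∑' n : ℕ, (A2 n).indicator (fun _ => Cn n) ω * gT (fun k => ω (k + n))) ∂(μ x)) := by
          rw [lintegral_indicator_const (measurableSet_hitGE_top hnrm R L), hρtop, mul_zero,
            add_zero]
    _ ≤ K + βbar * ST := by
          gcongr
          -- first integral ≤ K
          · rw [lintegral_tsum fun n => (measurable_const.indicator (hA1m n)).aemeasurable]
            have heq : ∀ n : ℕ, ∫⁻ ω, (A1 n).indicator (fun _ => Cn n) ω ∂(μ x) =
                Cn n * μ x (A1 n) := fun n => lintegral_indicator_const (hA1m n) _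
            refine le_trans (le_of_eq (tsum_congr heq)) ?_
            refine le_trans (tsum_le_lintegral (μ x) A1 hA1m Cn
              (fun ω => expENat c (hitGE nrm R L ω)) ?_) hρK
            intro ω
            rcases eq_or_ne (hitGE nrm R L ω) ⊤ with htop | hne
            · have hz : ∀ n : ℕ, (A1 n).indicator (fun _ => Cn n) ω = 0 := by
                intro n
                apply indicator_of_notMem
                rintro ⟨hmem, -⟩
                simp only [mem_setOf_eq] at hmem
                rw [htop] at hmem
                exact (ENat.coe_ne_top n) hmem.symm
              simp only [hz, tsum_zero]
              exact zero_le
            · obtain ⟨n₀, hn₀⟩ := eq_coe_of_ne_top hne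
              have hsing : (∑' n : ℕ, (A1 n).indicator (fun _ => Cn n) ω) =
                  (A1 n₀).indicator (fun _ => Cn n₀) ω := by
                apply tsum_eq_single
                intro j hj
                apply indicator_of_notMem
                rintro ⟨hmem, -⟩
                simp only [mem_setOf_eq] at hmem
                rw [hn₀] at hmem
                exact hj (by exact_mod_cast hmem.symm)
              rw [hsing]
              rw [hn₀, expENat_coe]
              by_cases hmem : ω ∈ A1 n₀
              · rw [indicator_of_mem hmem]
              · rw [indicator_of_notMem hmem]
                exact zero_le
          -- second integral ≤ βbar * ST
          · rw [lintegral_tsum fun n => (ht2term n).aemeasurable]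
            calc ∑' n : ℕ, ∫⁻ ω, (A2 n).indicator (fun _ => Cn n) ω *
                  gT (fun k => ω (k + n)) ∂(μ x)
                ≤ ∑' n : ℕ, Cn n * ST * μ x (A2 n) := by
                  apply ENNReal.tsum_le_tsum
                  intro n
                  refine markov_bound μ hMarkov x n (A2 n) (hA2m n) ?_ (Cn n) gT hgTmeas ST ?_
                  · intro ω ω' hag
                    have h1 := hitGE_eq_coe_coord nrm R L (n := n) hag
                    have h2 := coe_lt_hitGE_coord nrm γ 1 (n := n) hag
                    simp only [hA2, mem_inter_iff, mem_setOf_eq, mem_compl_iff, not_le]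
                    rw [h1, h2]
                  · rintro ω ⟨hmem, -⟩
                    have hval : nrm (ω n) ≤ R :=
                      ((hitGE_eq_coe_iff nrm R L ω n).1 hmem).2.1
                    exact hS (ω n) hval
              _ = ST * ∑' n : ℕ, Cn n * μ x (A2 n) := by
                  rw [← ENNReal.tsum_mul_left]
                  exact tsum_congr fun n => by ring
              _ ≤ ST * βbar := by
                  apply mul_le_mul_right
                  refine le_trans (tsum_le_lintegral (μ x) A2 hA2m Cn
                    (fun ω => expENat c (hitGE nrm R L ω) *
                      ({ω' : ℕ → X | hitGE nrm γ 1 ω' ≤ (L : ℕ∞)}ᶜ).indicator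
                        (fun _ => (1 : ℝ≥0∞)) ω) ?_) hβ
                  intro ω
                  rcases eq_or_ne (hitGE nrm R L ω) ⊤ with htop | hne
                  · have hz : ∀ n : ℕ, (A2 n).indicator (fun _ => Cn n) ω = 0 := by
                      intro n
                      apply indicator_of_notMem
                      rintro ⟨hmem, -⟩
                      simp only [mem_setOf_eq] at hmem
                      rw [htop] at hmem
                      exact (ENat.coe_ne_top n) hmem.symm
                    simp only [hz, tsum_zero]
                    exact zero_le
                  · obtain ⟨n₀, hn₀⟩ := eq_coe_of_ne_top hne
                    have hsing : (∑' n : ℕ, (A2 n).indicator (fun _ => Cn n) ω) =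
                        (A2 n₀).indicator (fun _ => Cn n₀) ω := by
                      apply tsum_eq_single
                      intro j hj
                      apply indicator_of_notMem
                      rintro ⟨hmem, -⟩
                      simp only [mem_setOf_eq] at hmem
                      rw [hn₀] at hmem
                      exact hj (by exact_mod_cast hmem.symm)
                    rw [hsing]
                    by_cases hmem : ω ∈ A2 n₀
                    · rw [indicator_of_mem hmem]
                      have hLn₀ : L ≤ n₀ := by
                        have := le_hitGE nrm R L ω
                        rw [hn₀] at this
                        exact_mod_cast this
                      have hτn : ¬ hitGE nrm γ 1 ω ≤ (n₀ : ℕ∞) := hmem.2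
                      have hfail : ω ∈ {ω' : ℕ → X | hitGE nrm γ 1 ω' ≤ (L : ℕ∞)}ᶜ := by
                        intro hcon
                        have hcon' : hitGE nrm γ 1 ω ≤ (L : ℕ∞) := hcon
                        exact hτn (le_trans hcon' (by exact_mod_cast hLn₀))
                      rw [indicator_of_mem hfail, hn₀, expENat_coe, mul_one]
                    · rw [indicator_of_notMem hmem]
                      exact zero_le
              _ = βbar * ST := mul_comm _ _

theorem beta_bound (ν : Measure (ℕ → X)) (hnrm : Measurable nrm) (R γ : ℝ) {L : ℕ}
    (hL : 1 ≤ L) {c c₀ : ℝ} (hc : 0 < c) (hcc₀ : c ≤ c₀) (hcc₀2 : c ≤ c₀ / 2)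
    (N : ℕ) (K : ℝ≥0∞) (δ1 : ℝ) (hδ1 : 0 < δ1) (hδ1h : δ1 ≤ 1 / 2)
    (hρK : ∫⁻ ω, expENat c₀ (hitGE nrm R L ω) ∂ν ≤ K)
    (hfail : ν ({ω' : ℕ → X | hitGE nrm γ 1 ω' ≤ (L : ℕ∞)}ᶜ) ≤ ENNReal.ofReal (1 - δ1))
    (hKN : K ≤ ENNReal.ofReal (Real.exp (c₀ / 2 * N) * (δ1 / 4)))
    (hcN : Real.exp (c * N) * (1 - δ1) ≤ 1 - δ1 / 2) :
    ∫⁻ ω, expENat c (hitGE nrm R L ω) *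
        ({ω' : ℕ → X | hitGE nrm γ 1 ω' ≤ (L : ℕ∞)}ᶜ).indicator (fun _ => (1 : ℝ≥0∞)) ω
      ∂ν ≤ ENNReal.ofReal (1 - δ1 / 4) := by
  classical
  set F : Set (ℕ → X) := {ω' : ℕ → X | hitGE nrm γ 1 ω' ≤ (L : ℕ∞)}ᶜ with hF
  have hFmeas : MeasurableSet F := (measurableSet_hitGE_le hnrm γ 1 L).compl
  have hindle : ∀ ω, F.indicator (fun _ => (1 : ℝ≥0∞)) ω ≤ 1 := by
    intro ω
    by_cases hω : ω ∈ F
    · rw [indicator_of_mem hω]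
    · rw [indicator_of_notMem hω]; exact zero_le
  have hpt : ∀ ω : ℕ → X, expENat c (hitGE nrm R L ω) * F.indicator (fun _ => (1 : ℝ≥0∞)) ω ≤
      ENNReal.ofReal (Real.exp (c * N)) * F.indicator (fun _ => (1 : ℝ≥0∞)) ω +
      ENNReal.ofReal (Real.exp ((c - c₀) * N)) * expENat c₀ (hitGE nrm R L ω) := by
    intro ω
    by_cases hρ : hitGE nrm R L ω ≤ (N : ℕ∞)
    · exact le_add_right (mul_le_mul_left (expENat_le_of_le hc.le hρ) _)
    · have h2 := expENat_decay hc.le hcc₀ (le_of_lt (not_le.1 hρ))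
      calc expENat c (hitGE nrm R L ω) * F.indicator (fun _ => (1 : ℝ≥0∞)) ω
          ≤ expENat c (hitGE nrm R L ω) * 1 := mul_le_mul_right (hindle ω) _
        _ = expENat c (hitGE nrm R L ω) := mul_one _
        _ ≤ ENNReal.ofReal (Real.exp ((c - c₀) * N)) * expENat c₀ (hitGE nrm R L ω) := h2
        _ ≤ _ := le_add_left le_rfl
  have hintmeas : Measurable fun ω : ℕ → X =>
      ENNReal.ofReal (Real.exp (c * N)) * F.indicator (fun _ => (1 : ℝ≥0∞)) ω :=
    measurable_const.mul (measurable_const.indicator hFmeas)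
  calc ∫⁻ ω, expENat c (hitGE nrm R L ω) * F.indicator (fun _ => (1 : ℝ≥0∞)) ω ∂ν
      ≤ ∫⁻ ω, (ENNReal.ofReal (Real.exp (c * N)) * F.indicator (fun _ => (1 : ℝ≥0∞)) ω +
          ENNReal.ofReal (Real.exp ((c - c₀) * N)) * expENat c₀ (hitGE nrm R L ω)) ∂ν :=
        lintegral_mono hpt
    _ = (∫⁻ ω, ENNReal.ofReal (Real.exp (c * N)) * F.indicator (fun _ => (1 : ℝ≥0∞)) ω ∂ν) +
        ∫⁻ ω, ENNReal.ofReal (Real.exp ((c - c₀) * N)) * expENat c₀ (hitGE nrm R L ω) ∂ν :=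
        lintegral_add_left hintmeas _
    _ = ENNReal.ofReal (Real.exp (c * N)) * ν F +
        ENNReal.ofReal (Real.exp ((c - c₀) * N)) *
          ∫⁻ ω, expENat c₀ (hitGE nrm R L ω) ∂ν := by
        rw [lintegral_const_mul _ (measurable_const.indicator hFmeas),
          lintegral_indicator_const hFmeas (1 : ℝ≥0∞), one_mul,
          lintegral_const_mul _ (measurable_comp_hitGE hnrm R hL (expENat c₀))]
    _ ≤ ENNReal.ofReal (Real.exp (c * N)) * ENNReal.ofReal (1 - δ1) +
        ENNReal.ofReal (Real.exp ((c - c₀) * N)) *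
          ENNReal.ofReal (Real.exp (c₀ / 2 * N) * (δ1 / 4)) := by
        gcongr
        exact le_trans hρK hKN
    _ ≤ ENNReal.ofReal (1 - δ1 / 2) + ENNReal.ofReal (δ1 / 4) := by
        gcongr
        · rw [← ENNReal.ofReal_mul (le_of_lt (Real.exp_pos _))]
          exact ENNReal.ofReal_le_ofReal hcN
        · rw [← ENNReal.ofReal_mul (le_of_lt (Real.exp_pos _))]
          apply ENNReal.ofReal_le_ofReal
          rw [← mul_assoc, ← Real.exp_add]
          have harg : (c - c₀) * N + c₀ / 2 * N = (c - c₀ / 2) * N := by ring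
          rw [harg]
          have hexple : Real.exp ((c - c₀ / 2) * N) ≤ 1 := by
            apply Real.exp_le_one_iff.2
            have : c - c₀ / 2 ≤ 0 := by linarith
            have hN : (0:ℝ) ≤ N := Nat.cast_nonneg N
            nlinarith
          nlinarith [hexple, hδ1]
    _ = ENNReal.ofReal (1 - δ1 / 4) := by
        rw [← ENNReal.ofReal_add (by linarith) (by linarith)]
        congr 1
        ring

theorem top_null (ν : Measure (ℕ → X)) (hnrm : Measurable nrm) (r : ℝ) {L : ℕ}
    (hL : 1 ≤ L) {c : ℝ} {M : ℝ≥0∞} (hM : M ≠ ⊤)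
    (h : ∫⁻ ω, expENat c (hitGE nrm r L ω) ∂ν ≤ M) :
    ν {ω | hitGE nrm r L ω = ⊤} = 0 := by
  have hind : ∀ ω : ℕ → X,
      ({ω' : ℕ → X | hitGE nrm r L ω' = ⊤}).indicator (fun _ => (⊤ : ℝ≥0∞)) ω ≤
        expENat c (hitGE nrm r L ω) := by
    intro ω
    by_cases hω : ω ∈ {ω' : ℕ → X | hitGE nrm r L ω' = ⊤}
    · rw [indicator_of_mem hω, show hitGE nrm r L ω = ⊤ from hω, expENat_top]
    · rw [indicator_of_notMem hω]
      exact zero_le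
  have hbound : ⊤ * ν {ω | hitGE nrm r L ω = ⊤} ≤ M := by
    rw [← lintegral_indicator_const (measurableSet_hitGE_top hnrm r L) (⊤ : ℝ≥0∞)]
    exact le_trans (lintegral_mono hind) h
  by_contra h0
  rw [ENNReal.top_mul h0] at hbound
  exact hM (top_le_iff.1 hbound)

theorem lintegral_expENat_iSup (ν : Measure (ℕ → X)) (hnrm : Measurable nrm) (γ : ℝ)
    {c : ℝ} (hc : 0 < c) :
    ∫⁻ ω, expENat c (hitGE nrm γ 1 ω) ∂ν =
      ⨆ T : ℕ, ∫⁻ ω, expENat c (min (hitGE nrm γ 1 ω) (T : ℕ∞)) ∂ν := by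
  rw [← lintegral_iSup
    (fun T => measurable_comp_hitGE hnrm γ le_rfl (fun v => expENat c (min v (T : ℕ∞))))
    (fun T T' hTT ω => expENat_mono hc.le
      (min_le_min le_rfl (by exact_mod_cast hTT)))]
  apply lintegral_congr
  intro ω
  rcases eq_or_ne (hitGE nrm γ 1 ω) ⊤ with htop | hne
  · rw [htop, expENat_top]
    have hval : ∀ T : ℕ, min (⊤ : ℕ∞) (T : ℕ∞) = (T : ℕ∞) := fun T => min_eq_right le_top
    refine (eq_top_iff.2 ?_).symm
    have hsup : ∀ n : ℕ, (n : ℝ≥0∞) ≤ ⨆ T : ℕ, expENat c (min (⊤ : ℕ∞) (T : ℕ∞)) := by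
      intro n
      refine le_iSup_of_le (⌈(n : ℝ) / c⌉₊) ?_
      rw [hval, expENat_coe]
      rw [show ((n : ℝ≥0∞)) = ENNReal.ofReal (n : ℝ) from (ENNReal.ofReal_natCast n).symm]
      apply ENNReal.ofReal_le_ofReal
      have h1 : (n : ℝ) / c ≤ (⌈(n : ℝ) / c⌉₊ : ℝ) := Nat.le_ceil _
      have h2 : (n : ℝ) ≤ c * (⌈(n : ℝ) / c⌉₊ : ℝ) := by
        rw [← div_le_iff₀' hc] -- check name
        exact h1
      nlinarith [Real.add_one_le_exp (c * (⌈(n : ℝ) / c⌉₊ : ℝ)),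
        mul_nonneg hc.le (Nat.cast_nonneg ⌈(n : ℝ) / c⌉₊)]
    calc (⊤ : ℝ≥0∞) = ⨆ n : ℕ, (n : ℝ≥0∞) := ENNReal.iSup_natCast.symm
    _ ≤ _ := iSup_le hsup
  · obtain ⟨k, hk⟩ := eq_coe_of_ne_top hne
    rw [hk]
    apply le_antisymm
    · refine le_iSup_of_le k (le_of_eq ?_)
      rw [min_self]
    · apply iSup_le
      intro T
      exact expENat_mono hc.le (min_le_left _ _)

end Main

end S15

open S15

/-- Lemma A.2: for a time-homogeneous Markov chain given by its family of
trajectory measures `μ x` (started at `x`), if the "ball" `A_R = {x : ‖x‖ ≤ R}` is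
geometrically positive recurrent and from every point of `A_R` the chain reaches
`A_γ = {x : ‖x‖ ≤ γ}` within `L` steps with probability at least `δ > 0`, then `A_γ` is
geometrically positive recurrent as well. -/
theorem statement15
    {X : Type*} [MeasurableSpace X]
    -- trajectory measures of the chain, forming a kernel
    (μ : X → Measure (ℕ → X))
    (hprob : ∀ x, IsProbabilityMeasure (μ x))
    (hker : Measurable μ)
    (hstart : ∀ x, μ x {ω | ω 0 = x} = 1)
    -- time-homogeneous Markov property: for any bounded (ℝ≥0∞-valued) functional `h` of the
    -- trajectory up to time n and any functional `g` of the shifted trajectory,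
    -- 𝔼ₓ[h · g∘θₙ] = 𝔼ₓ[h · 𝔼_{ωₙ}[g]]
    (hMarkov : ∀ (x : X) (n : ℕ) (g h : (ℕ → X) → ℝ≥0∞),
      Measurable g → Measurable h →
      (∀ ω ω' : ℕ → X, (∀ i ≤ n, ω i = ω' i) → h ω = h ω') →
      ∫⁻ ω, h ω * g (fun k => ω (k + n)) ∂(μ x) =
        ∫⁻ ω, h ω * ∫⁻ ω', g ω' ∂(μ (ω n)) ∂(μ x))
    -- the nonnegative test function ‖·‖
    (nrm : X → ℝ) (hnrm : Measurable nrm) (hnrm0 : ∀ x, 0 ≤ nrm x)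
    (R γ : ℝ) (hγ : 0 < γ) (hγR : γ < R)
    -- (i) A_R is geometrically positive recurrent
    (hfin : ∀ x, μ x {ω | pathHitTime nrm R ω = ⊤} = 0)
    (hexp : ∃ c₀ : ℝ, 0 < c₀ ∧ ∃ M : ℝ≥0∞, M < ⊤ ∧
      ∀ x, nrm x ≤ R → ∫⁻ ω, expENat c₀ (pathHitTime nrm R ω) ∂(μ x) ≤ M)
    -- (ii) uniform lower bound δ for reaching A_γ from A_R within L steps
    (hreach : ∃ L : ℕ, 1 ≤ L ∧ ∃ δ : ℝ, 0 < δ ∧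
      ∀ x, nrm x ≤ R →
        ENNReal.ofReal δ ≤ μ x {ω | pathHitTime nrm γ ω ≤ (L : ℕ∞)}) :
    (∀ x, μ x {ω | pathHitTime nrm γ ω = ⊤} = 0) ∧
      ∃ c : ℝ, 0 < c ∧ ∃ M : ℝ≥0∞, M < ⊤ ∧
        ∀ x, nrm x ≤ γ → ∫⁻ ω, expENat c (pathHitTime nrm γ ω) ∂(μ x) ≤ M := by

  classical
  obtain ⟨c₀, hc₀, M, hMlt, hexpb⟩ := hexp
  obtain ⟨L, hL, δ, hδ, hreachb⟩ := hreach
  simp only [pathHitTime_eq] at hfin hexpb hreachb ⊢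
  set M1 := max M 1 with hM1def
  have hM1lt : M1 < ⊤ := max_lt hMlt ENNReal.one_lt_top
  have hbase : ∀ x, nrm x ≤ R → ∫⁻ ω, expENat c₀ (hitGE nrm R 1 ω) ∂(μ x) ≤ M1 :=
    fun x hx => (hexpb x hx).trans (le_max_left _ _)
  have hmom := moment_hitGE μ hMarkov hnrm R hc₀ M1 hfin hbase
  set K := M1 ^ L with hKdef
  have hKlt : K < ⊤ := ENNReal.pow_lt_top hM1lt
  have hρK : ∀ x, nrm x ≤ R → ∫⁻ ω, expENat c₀ (hitGE nrm R L ω) ∂(μ x) ≤ K :=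
    fun x hx => hmom L hL x hx
  -- δ1
  set δ1 : ℝ := min δ (1 / 2) with hδ1def
  have hδ1 : 0 < δ1 := lt_min hδ (by norm_num)
  have hδ1h : δ1 ≤ 1 / 2 := min_le_right _ _
  have hfailμ : ∀ x, nrm x ≤ R →
      μ x ({ω' : ℕ → X | hitGE nrm γ 1 ω' ≤ (L : ℕ∞)}ᶜ) ≤ ENNReal.ofReal (1 - δ1) := by
    intro x hx
    have h1 : ENNReal.ofReal δ1 ≤ μ x {ω' : ℕ → X | hitGE nrm γ 1 ω' ≤ (L : ℕ∞)} :=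
      le_trans (ENNReal.ofReal_le_ofReal (min_le_left _ _)) (hreachb x hx)
    have hset := measurableSet_hitGE_le hnrm γ 1 L
    haveI := hprob x
    rw [measure_compl hset (measure_ne_top _ _), measure_univ]
    calc (1 : ℝ≥0∞) - μ x {ω' : ℕ → X | hitGE nrm γ 1 ω' ≤ (L : ℕ∞)}
        ≤ 1 - ENNReal.ofReal δ1 := tsub_le_tsub_left h1 1
    _ = ENNReal.ofReal (1 - δ1) := by
        rw [ENNReal.ofReal_sub _ hδ1.le, ENNReal.ofReal_one]
  -- choice of N
  set Bc : ℝ := 4 * K.toReal / δ1 with hBdef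
  have hKtR : 0 ≤ K.toReal := ENNReal.toReal_nonneg
  have hB0 : 0 ≤ Bc := by positivity
  set N : ℕ := ⌈2 / c₀ * Real.log (Bc + 1)⌉₊ with hNdef
  have hc₀ne : c₀ ≠ 0 := hc₀.ne'
  have hNexp : Bc + 1 ≤ Real.exp (c₀ / 2 * N) := by
    rw [← Real.exp_log (show (0:ℝ) < Bc + 1 by linarith)]
    apply Real.exp_le_exp.2
    have h1 : 2 / c₀ * Real.log (Bc + 1) ≤ (N : ℝ) := Nat.le_ceil _
    have h2 : c₀ / 2 * (2 / c₀ * Real.log (Bc + 1)) ≤ c₀ / 2 * N :=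
      mul_le_mul_of_nonneg_left h1 (by linarith)
    have h3 : c₀ / 2 * (2 / c₀ * Real.log (Bc + 1)) = Real.log (Bc + 1) := by
      field_simp
    linarith
  have hKN : K ≤ ENNReal.ofReal (Real.exp (c₀ / 2 * N) * (δ1 / 4)) := by
    rw [← ENNReal.ofReal_toReal hKlt.ne]
    apply ENNReal.ofReal_le_ofReal
    have hKB : K.toReal = Bc * (δ1 / 4) := by
      rw [hBdef]
      field_simp
    rw [hKB]
    nlinarith
  -- choice of c
  set ratio : ℝ := (1 - δ1 / 2) / (1 - δ1) with hratiodef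
  have h1δ1 : 0 < 1 - δ1 := by linarith
  have hratio1 : 1 < ratio := by
    rw [hratiodef, lt_div_iff₀ h1δ1]
    linarith
  set c : ℝ := min (c₀ / 2) (Real.log ratio / (N + 1)) with hcdef
  have hc : 0 < c := lt_min (by linarith) (div_pos (Real.log_pos hratio1) (by positivity))
  have hcc₀2 : c ≤ c₀ / 2 := min_le_left _ _
  have hcc₀ : c ≤ c₀ := by linarith
  have hcN : Real.exp (c * N) * (1 - δ1) ≤ 1 - δ1 / 2 := by
    have h2 : c ≤ Real.log ratio / (N + 1) := min_le_right _ _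
    rw [le_div_iff₀ (by positivity : (0:ℝ) < (N : ℝ) + 1)] at h2
    have h3 : c * N ≤ Real.log ratio := le_trans (by nlinarith [hc.le]) h2
    have h4 : Real.exp (c * N) ≤ ratio := by
      rw [← Real.exp_log (show (0:ℝ) < ratio by linarith)]
      exact Real.exp_le_exp.2 h3
    calc Real.exp (c * N) * (1 - δ1) ≤ ratio * (1 - δ1) := by nlinarith
    _ = 1 - δ1 / 2 := by
        rw [hratiodef]
        exact div_mul_cancel₀ _ h1δ1.ne'
  set βbar := ENNReal.ofReal (1 - δ1 / 4) with hβdef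
  -- exponent-c bounds
  have hρKc : ∀ x, nrm x ≤ R → ∫⁻ ω, expENat c (hitGE nrm R L ω) ∂(μ x) ≤ K := by
    intro x hx
    exact le_trans (lintegral_mono fun ω => expENat_mono_c hc.le hcc₀ _) (hρK x hx)
  have hρtop : ∀ x, nrm x ≤ R → μ x {ω | hitGE nrm R L ω = ⊤} = 0 :=
    fun x hx => top_null (μ x) hnrm R hL hKlt.ne (hρK x hx)
  have hβ : ∀ x, nrm x ≤ R →
      ∫⁻ ω, expENat c (hitGE nrm R L ω) *
        ({ω' : ℕ → X | hitGE nrm γ 1 ω' ≤ (L : ℕ∞)}ᶜ).indicator (fun _ => (1 : ℝ≥0∞)) ω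
        ∂(μ x) ≤ βbar :=
    fun x hx => beta_bound (μ x) hnrm R γ hL hc hcc₀ hcc₀2 N K δ1 hδ1 hδ1h
      (hρK x hx) (hfailμ x hx) hKN hcN
  -- recursion for truncated functionals
  set S : ℕ → ℝ≥0∞ := fun T =>
    ⨆ (y : X) (_ : nrm y ≤ R), ∫⁻ ω, expENat c (min (hitGE nrm γ 1 ω) (T : ℕ∞)) ∂(μ y)
    with hSdef
  have hSle : ∀ T, S T ≤ ENNReal.ofReal (Real.exp (c * T)) := by
    intro T
    apply iSup₂_le
    intro y hy
    haveI := hprob y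
    calc ∫⁻ ω, expENat c (min (hitGE nrm γ 1 ω) (T : ℕ∞)) ∂(μ y)
        ≤ ∫⁻ _, ENNReal.ofReal (Real.exp (c * T)) ∂(μ y) :=
          lintegral_mono fun ω => expENat_le_of_le hc.le (min_le_right _ _)
    _ = ENNReal.ofReal (Real.exp (c * T)) := by rw [lintegral_const, measure_univ, mul_one]
  have hSne : ∀ T, S T ≠ ⊤ := fun T => ((hSle T).trans_lt ENNReal.ofReal_lt_top).ne
  have hrec : ∀ T, S T ≤ K + βbar * S T := by
    intro T
    apply iSup₂_le
    intro y hy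
    exact recursion_step μ hMarkov hnrm R γ hL hc K βbar (S T) T y
      (hρKc y hy) (hρtop y hy) (hβ y hy)
      (fun z hz => le_iSup₂ (f := fun (z : X) (_ : nrm z ≤ R) =>
        ∫⁻ ω, expENat c (min (hitGE nrm γ 1 ω) (T : ℕ∞)) ∂(μ z)) z hz)
  set M2 : ℝ≥0∞ := ENNReal.ofReal (K.toReal * 4 / δ1) with hM2def
  have hM2lt : M2 < ⊤ := ENNReal.ofReal_lt_top
  have hST : ∀ T, S T ≤ M2 := by
    intro T
    have h1 := hrec T
    have hmulne : βbar * S T ≠ ⊤ := ENNReal.mul_ne_top ENNReal.ofReal_ne_top (hSne T)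
    have hRHSne : K + βbar * S T ≠ ⊤ := ENNReal.add_ne_top.2 ⟨hKlt.ne, hmulne⟩
    have h2 : (S T).toReal ≤ K.toReal + (1 - δ1 / 4) * (S T).toReal := by
      have h3 := ENNReal.toReal_mono hRHSne h1
      rw [ENNReal.toReal_add hKlt.ne hmulne, ENNReal.toReal_mul, hβdef,
        ENNReal.toReal_ofReal (by linarith)] at h3
      exact h3
    have hstR : 0 ≤ (S T).toReal := ENNReal.toReal_nonneg
    have h4 : (S T).toReal ≤ K.toReal * 4 / δ1 := by
      rw [le_div_iff₀ hδ1]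
      nlinarith
    calc S T = ENNReal.ofReal (S T).toReal := (ENNReal.ofReal_toReal (hSne T)).symm
    _ ≤ M2 := ENNReal.ofReal_le_ofReal h4
  -- monotone convergence
  have hfinalAR : ∀ x, nrm x ≤ R → ∫⁻ ω, expENat c (hitGE nrm γ 1 ω) ∂(μ x) ≤ M2 := by
    intro x hx
    rw [lintegral_expENat_iSup (μ x) hnrm γ hc]
    apply iSup_le
    intro T
    refine le_trans ?_ (hST T)
    exact le_iSup₂ (f := fun (z : X) (_ : nrm z ≤ R) =>
      ∫⁻ ω, expENat c (min (hitGE nrm γ 1 ω) (T : ℕ∞)) ∂(μ z)) x hx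
  have hARnull : ∀ x, nrm x ≤ R → μ x {ω | hitGE nrm γ 1 ω = ⊤} = 0 :=
    fun x hx => top_null (μ x) hnrm γ le_rfl hM2lt.ne (hfinalAR x hx)
  -- null for arbitrary starting points
  have hGmeas : MeasurableSet {ω : ℕ → X | hitGE nrm γ 1 ω = ⊤} :=
    measurableSet_hitGE_top hnrm γ 1
  have hnull : ∀ x, μ x {ω : ℕ → X | hitGE nrm γ 1 ω = ⊤} = 0 := by
    intro x
    set G : Set (ℕ → X) := {ω | hitGE nrm γ 1 ω = ⊤} with hGdef
    set An : ℕ → Set (ℕ → X) := fun n =>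
      {ω | hitGE nrm R 1 ω = (n : ℕ∞)} ∩ {ω | hitGE nrm γ 1 ω ≤ (n : ℕ∞)}ᶜ with hAndef
    have hAnm : ∀ n, MeasurableSet (An n) := fun n =>
      (measurableSet_hitGE_eq hnrm R le_rfl n).inter
        (measurableSet_hitGE_le hnrm γ 1 n).compl
    have hsub : G ⊆ {ω | hitGE nrm R 1 ω = ⊤} ∪
        ⋃ n : ℕ, (An n ∩ (fun (ω : ℕ → X) k => ω (k + n)) ⁻¹' G) := by
      intro ω hω
      have hωG : hitGE nrm γ 1 ω = ⊤ := hω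
      rcases eq_or_ne (hitGE nrm R 1 ω) ⊤ with htop | hne
      · exact Or.inl htop
      · obtain ⟨n, hn⟩ := eq_coe_of_ne_top hne
        right
        refine mem_iUnion.2 ⟨n, ⟨⟨hn, ?_⟩, ?_⟩⟩
        · intro hcon
          have hcon' : hitGE nrm γ 1 ω ≤ (n : ℕ∞) := hcon
          rw [hωG] at hcon'
          exact (ENat.coe_ne_top n) (top_le_iff.1 hcon')
        · have hlt : (n : ℕ∞) < hitGE nrm γ 1 ω := by
            rw [hωG]
            exact lt_of_le_of_ne le_top (ENat.coe_ne_top n)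
          have hshift := hitGE_shift nrm γ ω hlt
          rw [hωG] at hshift
          show hitGE nrm γ 1 (fun k => ω (k + n)) = ⊤
          by_contra hne2
          obtain ⟨s, hs⟩ := eq_coe_of_ne_top hne2
          rw [hs] at hshift
          have hcast : ((n + s : ℕ) : ℕ∞) = ⊤ := by
            rw [Nat.cast_add]
            exact hshift.symm
          exact (ENat.coe_ne_top _) hcast
    have hzero : ∀ n : ℕ, μ x (An n ∩ (fun (ω : ℕ → X) k => ω (k + n)) ⁻¹' G) = 0 := by
      intro n
      have hpre : MeasurableSet ((fun (ω : ℕ → X) k => ω (k + n)) ⁻¹' G) :=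
        measurable_shift n hGmeas
      have heqind : ∀ ω : ℕ → X,
          (An n ∩ (fun (ω : ℕ → X) k => ω (k + n)) ⁻¹' G).indicator
            (fun _ => (1 : ℝ≥0∞)) ω =
          (An n).indicator (fun _ => (1 : ℝ≥0∞)) ω *
            G.indicator (fun _ => (1 : ℝ≥0∞)) (fun k => ω (k + n)) := by
        intro ω
        by_cases h1 : ω ∈ An n <;>
          by_cases h2 : ω ∈ (fun (ω : ℕ → X) k => ω (k + n)) ⁻¹' G
        · rw [indicator_of_mem (mem_inter h1 h2), indicator_of_mem h1,
            indicator_of_mem (show (fun k => ω (k + n)) ∈ G from h2), one_mul]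
        · rw [indicator_of_notMem (fun hmm => h2 hmm.2),
            indicator_of_notMem (show ¬ (fun k => ω (k + n)) ∈ G from h2), mul_zero]
        · rw [indicator_of_notMem (fun hmm => h1 hmm.1), indicator_of_notMem h1, zero_mul]
        · rw [indicator_of_notMem (fun hmm => h1 hmm.1), indicator_of_notMem h1, zero_mul]
      have hμeq : μ x (An n ∩ (fun (ω : ℕ → X) k => ω (k + n)) ⁻¹' G) =
          ∫⁻ ω, (An n).indicator (fun _ => (1 : ℝ≥0∞)) ω *
            G.indicator (fun _ => (1 : ℝ≥0∞)) (fun k => ω (k + n)) ∂(μ x) := by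
        calc μ x (An n ∩ (fun (ω : ℕ → X) k => ω (k + n)) ⁻¹' G)
            = 1 * μ x (An n ∩ (fun (ω : ℕ → X) k => ω (k + n)) ⁻¹' G) := (one_mul _).symm
        _ = ∫⁻ ω, (An n ∩ (fun (ω : ℕ → X) k => ω (k + n)) ⁻¹' G).indicator
              (fun _ => (1 : ℝ≥0∞)) ω ∂(μ x) :=
            (lintegral_indicator_const ((hAnm n).inter hpre) 1).symm
        _ = _ := lintegral_congr heqind
      have hb := markov_bound μ hMarkov x n (An n) (hAnm n) ?_ 1
        (G.indicator (fun _ => (1 : ℝ≥0∞))) (measurable_const.indicator hGmeas) 0 ?_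
      · rw [hμeq]
        refine le_antisymm ?_ (zero_le)
        refine le_trans hb ?_
        simp
      · intro ω ω' hag
        have h1 := hitGE_eq_coe_coord nrm R 1 (n := n) hag
        have h2 := coe_lt_hitGE_coord nrm γ 1 (n := n) hag
        simp only [hAndef, mem_inter_iff, mem_setOf_eq, mem_compl_iff, not_le]
        rw [h1, h2]
      · intro ω hω
        rw [lintegral_indicator_const hGmeas (1 : ℝ≥0∞), one_mul]
        have hval : nrm (ω n) ≤ R := ((hitGE_eq_coe_iff nrm R 1 ω n).1 hω.1).2.1
        rw [hGdef, hARnull (ω n) hval]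
    have hM : μ x G ≤ μ x {ω | hitGE nrm R 1 ω = ⊤} +
        ∑' n : ℕ, μ x (An n ∩ (fun (ω : ℕ → X) k => ω (k + n)) ⁻¹' G) :=
      le_trans (measure_mono hsub)
        (le_trans (measure_union_le _ _) (add_le_add le_rfl (measure_iUnion_le _)))
    rw [hfin x] at hM
    simp only [hzero, tsum_zero, zero_add, add_zero] at hM
    exact le_antisymm hM (zero_le)
  refine ⟨hnull, c, hc, M2, hM2lt, fun x hx => hfinalAR x (le_trans hx hγR.le)⟩

end
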